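/- Let X be a sober topological space and let f : X → ℕ be a function such that for every k ∈ ℕ the set {x ∈ X : f(x) ≥ k} is closed in X. For a nonempty irreducible closed subset Z ⊆ X, define its codimension codim(Z) as the coheight of Z in the partially ordered set of nonempty irreducible closed subsets of X ordered by inclusion. Then the following are equivalent: (i) for every δ ∈ ℕ, every irreducible component T of the locally closed set S_δ := {x ∈ X : f(x) = δ} satisfies codim(closure of T) ≥ δ; (ii) for every nonempty irreducible closed subset Z ⊆ X with generic point η, one has codim(Z) ≥ f(η). -/

import Mathlib

/-!
If `T` is an irreducible component of `{f = δ}`, the generic point `η` of `closure T` lies in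
`closure T ⊆ {f ≥ δ}`, so `codim (closure T) ≥ f η ≥ δ` follows from the pointwise bound.
Conversely, `{η}` is an irreducible subset of `{f = f η}`, hence (Zorn) lies in a component `T`;
then `closure {η} ⊆ closure T`, and coheight is antitone.
-/

open TopologicalSpace

section

variable {X : Type*} [TopologicalSpace X]

theorem IsChain.isPreirreducible_sUnion {c : Set (Set X)} (hchain : IsChain (· ⊆ ·) c)
    (hc : ∀ t ∈ c, IsPreirreducible t) : IsPreirreducible (⋃₀ c) := by
  rintro u v hu hv ⟨y, hy, hyu⟩ ⟨x, hx, hxv⟩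
  obtain ⟨p, hpc, hyp⟩ := Set.mem_sUnion.1 hy
  obtain ⟨q, hqc, hxq⟩ := Set.mem_sUnion.1 hx
  rcases hchain.total hpc hqc with hpq | hqp
  · obtain ⟨z, hzq, hzuv⟩ := hc q hqc u v hu hv ⟨y, hpq hyp, hyu⟩ ⟨x, hxq, hxv⟩
    exact ⟨z, Set.mem_sUnion_of_mem hzq hqc, hzuv⟩
  · obtain ⟨z, hzp, hzuv⟩ := hc p hpc u v hu hv ⟨y, hyp, hyu⟩ ⟨x, hqp hxq, hxv⟩
    exact ⟨z, Set.mem_sUnion_of_mem hzp hpc, hzuv⟩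

theorem IsIrreducible.exists_maximal_subset {s t : Set X} (ht : IsIrreducible t) (hts : t ⊆ s) :
    ∃ T, t ⊆ T ∧ Maximal (fun u => u ⊆ s ∧ IsIrreducible u) T := by
  refine zorn_subset_nonempty {u | u ⊆ s ∧ IsIrreducible u} ?_ t ⟨hts, ht⟩
  rintro c hc hchain ⟨w, hw⟩
  refine ⟨⋃₀ c, ⟨Set.sUnion_subset fun u hu => (hc hu).1, ?_, ?_⟩,
    fun _ => Set.subset_sUnion_of_mem⟩
  · exact (hc hw).2.nonempty.mono (Set.subset_sUnion_of_mem hw)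
  · exact hchain.isPreirreducible_sUnion fun u hu => (hc hu).2.isPreirreducible

end

theorem delta_regularity_tfae_general {X : Type*} [TopologicalSpace X] [QuasiSober X]
    (f : X → ℕ) (hf : ∀ k : ℕ, IsClosed {x : X | k ≤ f x}) :
    (∀ δ : ℕ, ∀ T : Set X,
        (hT : Maximal (fun t : Set X => t ⊆ {x | f x = δ} ∧ IsIrreducible t) T) →
        (δ : ℕ∞) ≤ Order.coheight
          (⟨closure T, hT.prop.2.closure, isClosed_closure⟩ : IrreducibleCloseds X)) ↔
    (∀ Z : IrreducibleCloseds X, ∀ η : X, closure {η} = (Z : Set X) →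
        (f η : ℕ∞) ≤ Order.coheight Z) := by
  constructor
  · intro h Z η hη
    obtain ⟨T, hηT, hT⟩ := isIrreducible_singleton.exists_maximal_subset
      (Set.singleton_subset_iff.2 (rfl : f η = f η) : {η} ⊆ {x | f x = f η})
    have hZT : Z ≤ ⟨closure T, hT.prop.2.closure, isClosed_closure⟩ := by
      change (Z : Set X) ⊆ closure T
      exact hη ▸ closure_mono hηT
    exact (h (f η) T hT).trans (Order.coheight_anti hZT)
  · intro h δ T hT
    obtain ⟨η, hη⟩ := QuasiSober.sober hT.prop.2.closure isClosed_closure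
    have hδη : δ ≤ f η :=
      closure_minimal (fun x hx => (hT.prop.1 hx).ge) (hf δ) (hη ▸ subset_closure rfl)
    exact (Nat.cast_le.2 hδη).trans (h _ η hη)

/-- Characterization of δ-regularity (Lemma 2.18): for an upper semicontinuous `f : X → ℕ` on a
sober space, the condition that every irreducible component `T` of each δ-locus
`S_δ = {f = δ}` satisfies `codim (closure T) ≥ δ` is equivalent to the condition that every
nonempty irreducible closed subset `Z` with generic point `η` satisfies `codim Z ≥ f η`,
where the codimension of an irreducible closed subset is its coheight in the poset of
irreducible closed subsets ordered by inclusion. -/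
theorem delta_regularity_tfae {X : Type*} [TopologicalSpace X] [QuasiSober X] [T0Space X]
    (f : X → ℕ) (hf : ∀ k : ℕ, IsClosed {x : X | k ≤ f x}) :
    (∀ δ : ℕ, ∀ T : Set X,
        (hT : Maximal (fun t : Set X => t ⊆ {x | f x = δ} ∧ IsIrreducible t) T) →
        (δ : ℕ∞) ≤ Order.coheight
          (⟨closure T, hT.prop.2.closure, isClosed_closure⟩ : IrreducibleCloseds X)) ↔
    (∀ Z : IrreducibleCloseds X, ∀ η : X, closure {η} = (Z : Set X) →
        (f η : ℕ∞) ≤ Order.coheight Z) :=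
  delta_regularity_tfae_general f hf
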